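/- arXiv:1212.2834 — 3 statements merged into one kernel-verified Lean document; each statement's English description precedes it below -/
import Mathlib

section
/- Suppose Null(Φ) ∩ 𝒦 ∩ 𝒫 = {0} (the zero matrix is the only n×L matrix that is simultaneously in the null space of Φ, k-sparse in each column, and p-row-sparse). Then for every ζ > 0 there exists a finite radius r > 0 such that every matrix X ∈ 𝒦 ∩ 𝒫 with max_{i,l} |X_{i,l}| ≥ r satisfies inf_{X_N ∈ Null(Φ)} ‖X − X_N‖_F > ζ. -/
/-- Frobenius norm of a real matrix. -/
noncomputable def frob {a b : ℕ} (A : Matrix (Fin a) (Fin b) ℝ) : ℝ :=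
  Real.sqrt (∑ i, ∑ j, (A i j) ^ 2)

/-- The set 𝒦 of n×L matrices whose every column has at most k nonzero entries. -/
def colSparse (a b k : ℕ) : Set (Matrix (Fin a) (Fin b) ℝ) :=
  {Θ | ∀ l, ({i | Θ i l ≠ 0} : Set (Fin a)).ncard ≤ k}

/-- The set 𝒫 of n×L matrices having at most p nonzero rows. -/
def rowSparse (a b p : ℕ) : Set (Matrix (Fin a) (Fin b) ℝ) :=
  {Θ | ({i | ∃ l, Θ i l ≠ 0} : Set (Fin a)).ncard ≤ p}

/-!
𝒦 ∩ 𝒫 is a closed cone meeting Null(Φ) only at 0. On its (compact) unit sphere the continuous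
function `‖Φ X‖` is therefore bounded below by some `c > 0`, and by homogeneity
`‖Φ X‖ ≥ c ‖X‖` on the whole cone. For `X_N ∈ Null(Φ)` this gives
`‖X - X_N‖_F ≥ ‖Φ (X - X_N)‖ / ‖Φ‖ ≥ c' ‖X‖_F ≥ c' max |X_il|`, which exceeds `ζ` once
`max |X_il| ≥ r := 2ζ / c'`.
-/

open Set Function Metric

section ConeBound

variable {E F : Type*} [NormedAddCommGroup E] [NormedSpace ℝ E] [ProperSpace E]
  [NormedAddCommGroup F] [NormedSpace ℝ F]

theorem ContinuousLinearMap.exists_pos_mul_norm_le_norm_apply (f : E →L[ℝ] F) {S : Set E}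
    (hS : IsClosed S) (hcone : ∀ x ∈ S, ∀ t : ℝ, 0 < t → t • x ∈ S)
    (hker : ∀ x ∈ S, f x = 0 → x = 0) :
    ∃ c > 0, ∀ x ∈ S, c * ‖x‖ ≤ ‖f x‖ := by
  have hpos : ∀ x ∈ S ∩ sphere 0 1, 0 < ‖f x‖ := by
    rintro x ⟨hxS, hx⟩
    rw [mem_sphere_zero_iff_norm] at hx
    refine norm_pos_iff.mpr fun hfx => ?_
    simp [hker x hxS hfx] at hx
  obtain ⟨c, hc, hmin⟩ := ((isCompact_sphere 0 1).inter_left hS).exists_forall_le'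
    f.continuous.norm.continuousOn hpos
  refine ⟨c, hc, fun x hx => ?_⟩
  rcases eq_or_ne x 0 with rfl | hx0
  · simp
  have hxn : 0 < ‖x‖ := norm_pos_iff.mpr hx0
  have hunit : ‖x‖⁻¹ • x ∈ S ∩ sphere 0 1 :=
    ⟨hcone x hx _ (inv_pos.mpr hxn), by simp [norm_smul, hxn.ne']⟩
  have hc_le : c ≤ ‖f (‖x‖⁻¹ • x)‖ := hmin _ hunit
  rwa [map_smul, norm_smul, norm_inv, norm_norm, inv_mul_eq_div, le_div_iff₀ hxn] at hc_le

theorem ContinuousLinearMap.exists_pos_mul_norm_le_norm_sub (f : E →L[ℝ] F) {S : Set E}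
    (hS : IsClosed S) (hcone : ∀ x ∈ S, ∀ t : ℝ, 0 < t → t • x ∈ S)
    (hker : ∀ x ∈ S, f x = 0 → x = 0) :
    ∃ c > 0, ∀ x ∈ S, ∀ y, f y = 0 → c * ‖x‖ ≤ ‖x - y‖ := by
  obtain ⟨c, hc, hbound⟩ := f.exists_pos_mul_norm_le_norm_apply hS hcone hker
  refine ⟨c / (‖f‖ + 1), by positivity, fun x hx y hy => ?_⟩
  rw [div_mul_eq_mul_div, div_le_iff₀ (by positivity)]
  calc c * ‖x‖ ≤ ‖f (x - y)‖ := by rw [map_sub, hy, sub_zero]; exact hbound x hx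
    _ ≤ ‖f‖ * ‖x - y‖ := f.le_opNorm _
    _ ≤ ‖x - y‖ * (‖f‖ + 1) := by nlinarith [norm_nonneg (x - y)]

end ConeBound

theorem isClosed_setOf_ncard_support_le {ι M : Type*} [Finite ι] [TopologicalSpace M] [Zero M]
    [T1Space M] (k : ℕ) : IsClosed {x : ι → M | (support x).ncard ≤ k} := by
  have hunion : {x : ι → M | (support x).ncard ≤ k} =
      ⋃ s ∈ {s : Set ι | s.ncard ≤ k}, {x | support x ⊆ s} := by
    ext x
    simp only [mem_ofPred_eq, mem_iUnion, exists_prop]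
    exact ⟨fun h => ⟨_, h, subset_rfl⟩,
      fun ⟨s, hs, hxs⟩ => (ncard_le_ncard hxs (toFinite s)).trans hs⟩
  rw [hunion]
  refine (toFinite _).isClosed_biUnion fun s _ => ?_
  simp only [support_subset_iff', ofPred_forall]
  exact isClosed_iInter fun i => isClosed_iInter fun _ =>
    isClosed_singleton.preimage (continuous_apply i)

theorem isClosed_colSparse (a b k : ℕ) : IsClosed (colSparse a b k) := by
  rw [colSparse, ofPred_forall]
  exact isClosed_iInter fun l =>
    (isClosed_setOf_ncard_support_le (ι := Fin a) (M := ℝ) k).preimage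
      (f := fun Θ : Matrix (Fin a) (Fin b) ℝ => fun i => Θ i l) (by fun_prop)

theorem rowSparse_eq (a b p : ℕ) :
    rowSparse a b p = {Θ : Matrix (Fin a) (Fin b) ℝ | (support fun i => Θ i).ncard ≤ p} := by
  simp only [rowSparse, support, ne_iff, Pi.zero_apply]

theorem isClosed_rowSparse (a b p : ℕ) : IsClosed (rowSparse a b p) := by
  rw [rowSparse_eq]
  exact isClosed_setOf_ncard_support_le p

theorem smul_mem_colSparse {a b k : ℕ} {t : ℝ} (ht : t ≠ 0) {Θ : Matrix (Fin a) (Fin b) ℝ}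
    (hΘ : Θ ∈ colSparse a b k) : t • Θ ∈ colSparse a b k := by
  intro l
  simpa [ht] using hΘ l

theorem smul_mem_rowSparse {a b p : ℕ} {t : ℝ} (ht : t ≠ 0) {Θ : Matrix (Fin a) (Fin b) ℝ}
    (hΘ : Θ ∈ rowSparse a b p) : t • Θ ∈ rowSparse a b p := by
  simpa [rowSparse, ht] using hΘ

theorem abs_le_frob {a b : ℕ} (A : Matrix (Fin a) (Fin b) ℝ) (i : Fin a) (j : Fin b) :
    |A i j| ≤ frob A := by
  refine Real.abs_le_sqrt ?_
  calc A i j ^ 2 ≤ ∑ j', A i j' ^ 2 :=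
        Finset.single_le_sum (fun _ _ => sq_nonneg _) (Finset.mem_univ j)
    _ ≤ ∑ i', ∑ j', A i' j' ^ 2 :=
        Finset.single_le_sum (f := fun i' => ∑ j', A i' j' ^ 2)
          (fun _ _ => Finset.sum_nonneg fun _ _ => sq_nonneg _) (Finset.mem_univ i)

attribute [local instance] Matrix.frobeniusNormedAddCommGroup Matrix.frobeniusNormedSpace

theorem frob_eq_norm {a b : ℕ} (A : Matrix (Fin a) (Fin b) ℝ) : frob A = ‖A‖ := by
  simp [frob, Matrix.frobenius_norm_def, Real.sqrt_eq_rpow]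

theorem stmt_0_general (m n L k p : ℕ)
    (Φ : Matrix (Fin m) (Fin n) ℝ)
    (hnull : {Θ : Matrix (Fin n) (Fin L) ℝ | Φ * Θ = 0} ∩ colSparse n L k ∩ rowSparse n L p
      = {0}) :
    ∀ ζ : ℝ, 0 < ζ → ∃ r : ℝ, 0 < r ∧
      ∀ X ∈ colSparse n L k ∩ rowSparse n L p,
        (∃ i l, r ≤ |X i l|) →
          ζ < sInf ((fun XN => frob (X - XN)) ''
            {Θ : Matrix (Fin n) (Fin L) ℝ | Φ * Θ = 0}) := by
  intro ζ hζ
  have hker : ∀ X ∈ colSparse n L k ∩ rowSparse n L p, Φ * X = 0 → X = 0 := by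
    intro X hX hΦX
    have hmem : X ∈ {Θ : Matrix (Fin n) (Fin L) ℝ | Φ * Θ = 0} ∩ colSparse n L k ∩
        rowSparse n L p := ⟨⟨hΦX, hX.1⟩, hX.2⟩
    rwa [hnull] at hmem
  obtain ⟨c, hc, hbound⟩ := (mulLeftLinearMap (Fin L) ℝ Φ).toContinuousLinearMap
    |>.exists_pos_mul_norm_le_norm_sub ((isClosed_colSparse n L k).inter (isClosed_rowSparse n L p))
      (fun X hX t ht => ⟨smul_mem_colSparse ht.ne' hX.1, smul_mem_rowSparse ht.ne' hX.2⟩) hker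
  refine ⟨2 * ζ / c, by positivity, ?_⟩
  rintro X hX ⟨i, l, hil⟩
  have hfar : ∀ XN : Matrix (Fin n) (Fin L) ℝ, Φ * XN = 0 → 2 * ζ ≤ frob (X - XN) := by
    intro XN hXN
    calc 2 * ζ = c * (2 * ζ / c) := by field_simp
      _ ≤ c * frob X := by gcongr; exact hil.trans (abs_le_frob X i l)
      _ ≤ frob (X - XN) := by rw [frob_eq_norm, frob_eq_norm]; exact hbound X hX XN hXN
  refine (by linarith : ζ < 2 * ζ).trans_le (le_csInf ⟨_, 0, Matrix.mul_zero Φ, rfl⟩ ?_)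
  rintro _ ⟨XN, hXN, rfl⟩
  exact hfar XN hXN

theorem stmt_0 (m n L k p : ℕ) (hm : 0 < m) (hn : 0 < n) (hL : 0 < L)
    (hk : 0 < k) (hp : 0 < p)
    (Φ : Matrix (Fin m) (Fin n) ℝ)
    (hnull : {Θ : Matrix (Fin n) (Fin L) ℝ | Φ * Θ = 0} ∩ colSparse n L k ∩ rowSparse n L p
      = {0}) :
    ∀ ζ : ℝ, 0 < ζ → ∃ r : ℝ, 0 < r ∧
      ∀ X ∈ colSparse n L k ∩ rowSparse n L p,
        (∃ i l, r ≤ |X i l|) →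
          ζ < sInf ((fun XN => frob (X - XN)) ''
            {Θ : Matrix (Fin n) (Fin L) ℝ | Φ * Θ = 0}) :=
  stmt_0_general m n L k p Φ hnull
end

section
/- Let Δ be a nonzero n×L matrix with Δ ∈ Null(Φ) ∩ 𝒦 ∩ 𝒫, and let X ∈ 𝒦 ∩ 𝒫 be a matrix whose support contains the support of Δ (i.e. Δ_{i,l} ≠ 0 implies X_{i,l} ≠ 0). Then for every λ ∈ ℝ, the matrix X + λΔ belongs to 𝒦 ∩ 𝒫 and satisfies ‖Y − Φ(X + λΔ)‖_F = ‖Y − ΦX‖_F. Consequently, if such an X is a minimizer of ‖Y − ΦΘ‖_F² over Θ ∈ 𝒦 ∩ 𝒫, then the set of minimizers is unbounded. -/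
/-!
Moving along a null direction Δ of Φ leaves the residual Y - ΦX unchanged, and as long as
supp Δ ⊆ supp X the line X + λΔ can only lose nonzero entries, so it stays in both sparsity
classes. Hence the whole line consists of minimizers when X is one, and since Δ has a nonzero
entry, the corresponding entry of X + λΔ (bounded by the Frobenius norm) can be made arbitrarily
large.
-/

namespace Matrix

variable {a b : ℕ}

lemma abs_apply_le_frob (A : Matrix (Fin a) (Fin b) ℝ) (i : Fin a) (j : Fin b) :
    |A i j| ≤ frob A := by
  rw [frob, ← Real.sqrt_sq_eq_abs]
  apply Real.sqrt_le_sqrt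
  calc (A i j) ^ 2 ≤ ∑ j', (A i j') ^ 2 :=
        Finset.single_le_sum (f := fun j' => (A i j') ^ 2) (fun _ _ => sq_nonneg _)
          (Finset.mem_univ j)
    _ ≤ ∑ i', ∑ j', (A i' j') ^ 2 :=
        Finset.single_le_sum (f := fun i' => ∑ j', (A i' j') ^ 2)
          (fun _ _ => Finset.sum_nonneg fun _ _ => sq_nonneg _) (Finset.mem_univ i)

lemma mem_colSparse_of_support_subset {k : ℕ} {Θ X : Matrix (Fin a) (Fin b) ℝ}
    (hX : X ∈ colSparse a b k) (hsupp : ∀ i l, Θ i l ≠ 0 → X i l ≠ 0) :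
    Θ ∈ colSparse a b k := fun l =>
  (Set.ncard_le_ncard (fun i hi => hsupp i l hi) (Set.toFinite _)).trans (hX l)

lemma mem_rowSparse_of_support_subset {p : ℕ} {Θ X : Matrix (Fin a) (Fin b) ℝ}
    (hX : X ∈ rowSparse a b p) (hsupp : ∀ i l, Θ i l ≠ 0 → X i l ≠ 0) :
    Θ ∈ rowSparse a b p := by
  refine (Set.ncard_le_ncard ?_ (Set.toFinite _)).trans hX
  rintro i ⟨l, hl⟩
  exact ⟨l, hsupp i l hl⟩

lemma add_smul_apply_ne_zero_imp {X Δ : Matrix (Fin a) (Fin b) ℝ}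
    (hsupp : ∀ i l, Δ i l ≠ 0 → X i l ≠ 0) (c : ℝ) :
    ∀ i l, (X + c • Δ) i l ≠ 0 → X i l ≠ 0 := by
  intro i l h hX
  have hΔ : Δ i l = 0 := not_imp_not.mp (hsupp i l) hX
  simp [hX, hΔ] at h

lemma exists_lt_frob_add_smul {X Δ : Matrix (Fin a) (Fin b) ℝ} (hΔ : Δ ≠ 0) (C : ℝ) :
    ∃ c : ℝ, C < frob (X + c • Δ) := by
  obtain ⟨i, l, hil⟩ : ∃ i l, Δ i l ≠ 0 := by
    by_contra! h
    exact hΔ (Matrix.ext h)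
  set c := (|C| + 1 - X i l) / Δ i l
  have hentry : (X + c • Δ) i l = |C| + 1 := by
    simp only [c, add_apply, smul_apply, smul_eq_mul]
    field_simp
    ring
  refine ⟨c, ?_⟩
  calc C < |C| + 1 := by linarith [le_abs_self C]
    _ = |(X + c • Δ) i l| := by rw [hentry, abs_of_pos (by positivity : (0 : ℝ) < |C| + 1)]
    _ ≤ frob (X + c • Δ) := abs_apply_le_frob _ _ _

end Matrix

theorem stmt_2_general (m n L k p : ℕ)
    (Φ : Matrix (Fin m) (Fin n) ℝ) (Y : Matrix (Fin m) (Fin L) ℝ)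
    (Δ X : Matrix (Fin n) (Fin L) ℝ)
    (hΔ0 : Δ ≠ 0)
    (hΔnull : Φ * Δ = 0)
    (hX : X ∈ colSparse n L k ∩ rowSparse n L p)
    (hsupp : ∀ i l, Δ i l ≠ 0 → X i l ≠ 0) :
    (∀ lam : ℝ,
      X + lam • Δ ∈ colSparse n L k ∩ rowSparse n L p ∧
      frob (Y - Φ * (X + lam • Δ)) = frob (Y - Φ * X)) ∧
    ((∀ Θ ∈ colSparse n L k ∩ rowSparse n L p,
        frob (Y - Φ * X) ≤ frob (Y - Φ * Θ)) →
      ∀ C : ℝ, ∃ Z ∈ colSparse n L k ∩ rowSparse n L p,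
        (∀ Θ ∈ colSparse n L k ∩ rowSparse n L p,
          frob (Y - Φ * Z) ≤ frob (Y - Φ * Θ)) ∧ C < frob Z) := by
  have hmem (c : ℝ) : X + c • Δ ∈ colSparse n L k ∩ rowSparse n L p :=
    ⟨Matrix.mem_colSparse_of_support_subset hX.1 (Matrix.add_smul_apply_ne_zero_imp hsupp c),
      Matrix.mem_rowSparse_of_support_subset hX.2 (Matrix.add_smul_apply_ne_zero_imp hsupp c)⟩
  have hmul (c : ℝ) : Φ * (X + c • Δ) = Φ * X := by
    rw [Matrix.mul_add, Matrix.mul_smul, hΔnull, smul_zero, add_zero]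
  refine ⟨fun c => ⟨hmem c, by rw [hmul]⟩, fun hmin C => ?_⟩
  obtain ⟨c, hc⟩ := Matrix.exists_lt_frob_add_smul (X := X) hΔ0 C
  exact ⟨X + c • Δ, hmem c, fun Θ hΘ => (hmul c).symm ▸ hmin Θ hΘ, hc⟩

theorem stmt_2 (m n L k p : ℕ) (hm : 0 < m) (hn : 0 < n) (hL : 0 < L)
    (hk : 0 < k) (hp : 0 < p)
    (Φ : Matrix (Fin m) (Fin n) ℝ) (Y : Matrix (Fin m) (Fin L) ℝ)
    (Δ X : Matrix (Fin n) (Fin L) ℝ)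
    (hΔ0 : Δ ≠ 0)
    (hΔnull : Φ * Δ = 0)
    (hΔ : Δ ∈ colSparse n L k ∩ rowSparse n L p)
    (hX : X ∈ colSparse n L k ∩ rowSparse n L p)
    (hsupp : ∀ i l, Δ i l ≠ 0 → X i l ≠ 0) :
    (∀ lam : ℝ,
      X + lam • Δ ∈ colSparse n L k ∩ rowSparse n L p ∧
      frob (Y - Φ * (X + lam • Δ)) = frob (Y - Φ * X)) ∧
    ((∀ Θ ∈ colSparse n L k ∩ rowSparse n L p,
        frob (Y - Φ * X) ≤ frob (Y - Φ * Θ)) →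
      ∀ C : ℝ, ∃ Z ∈ colSparse n L k ∩ rowSparse n L p,
        (∀ Θ ∈ colSparse n L k ∩ rowSparse n L p,
          frob (Y - Φ * Z) ≤ frob (Y - Φ * Θ)) ∧ C < frob Z) :=
  stmt_2_general m n L k p Φ Y Δ X hΔ0 hΔnull hX hsupp
end

section
/- Let X be a real n×L matrix. If Z is a minimizer of ‖Θ − X‖_F over Θ ∈ 𝒦 and W is a minimizer of ‖Θ − Z‖_F over Θ ∈ 𝒫, then W ∈ 𝒦 ∩ 𝒫. Symmetrically, if Z' is a minimizer of ‖Θ − X‖_F over Θ ∈ 𝒫 and W' is a minimizer of ‖Θ − Z'‖_F over Θ ∈ 𝒦, then W' ∈ 𝒦 ∩ 𝒫. In other words, a single alternating projection onto 𝒦 then 𝒫 (or onto 𝒫 then 𝒦) lands in the intersection 𝒦 ∩ 𝒫. -/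
/-- `Z` masked by the support of `W`. -/
noncomputable def mask {n L : ℕ} (Z W : Matrix (Fin n) (Fin L) ℝ) : Matrix (Fin n) (Fin L) ℝ :=
  fun i l => if W i l ≠ 0 then Z i l else 0

lemma key {n L : ℕ} (Z W : Matrix (Fin n) (Fin L) ℝ)
    (h : frob (W - Z) ≤ frob (mask Z W - Z)) :
    ∀ i l, W i l ≠ 0 → W i l = Z i l := by
  set Y : Matrix (Fin n) (Fin L) ℝ := mask Z W with hY
  have h2 : (0:ℝ) ≤ ∑ i, ∑ j, ((Y - Z) i j) ^ 2 :=
    Finset.sum_nonneg fun i _ => Finset.sum_nonneg fun j _ => sq_nonneg _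
  have h1 : (0:ℝ) ≤ ∑ i, ∑ j, ((W - Z) i j) ^ 2 :=
    Finset.sum_nonneg fun i _ => Finset.sum_nonneg fun j _ => sq_nonneg _
  have hsum : (∑ i, ∑ j, ((W - Z) i j) ^ 2) ≤ ∑ i, ∑ j, ((Y - Z) i j) ^ 2 := by
    have := pow_le_pow_left₀ (Real.sqrt_nonneg _) h 2
    simp only [frob] at this
    rwa [Real.sq_sqrt h1, Real.sq_sqrt h2] at this
  intro i l hW
  by_contra hne
  -- then the (i,l) term gives a strict inequality the other way
  have hterm : ∀ a : Fin n, ∀ b : Fin L, ((Y - Z) a b) ^ 2 ≤ ((W - Z) a b) ^ 2 := by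
    intro a b
    by_cases hab : W a b ≠ 0
    · simp [Matrix.sub_apply, hY, mask, hab, sq_nonneg]
    · simp [Matrix.sub_apply, hY, mask, hab, not_not.mp hab]
  have hstrict : ((Y - Z) i l) ^ 2 < ((W - Z) i l) ^ 2 := by
    have hz : (Y - Z) i l = 0 := by simp [Matrix.sub_apply, hY, mask, hW]
    have hne' : (W - Z) i l ≠ 0 := sub_ne_zero.mpr hne
    rw [hz]
    have : 0 < ((W - Z) i l) ^ 2 := by positivity
    simpa using this
  have inner : ∀ a : Fin n, (∑ j, ((Y - Z) a j) ^ 2) ≤ ∑ j, ((W - Z) a j) ^ 2 :=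
    fun a => Finset.sum_le_sum fun j _ => hterm a j
  have hlt : (∑ i, ∑ j, ((Y - Z) i j) ^ 2) < ∑ i, ∑ j, ((W - Z) i j) ^ 2 := by
    apply Finset.sum_lt_sum (fun a _ => inner a)
    exact ⟨i, Finset.mem_univ i, by
      apply Finset.sum_lt_sum (fun j _ => hterm i j)
      exact ⟨l, Finset.mem_univ l, hstrict⟩⟩
  exact absurd hsum (not_le.mpr hlt)

lemma mask_col {n L k : ℕ} (Z W : Matrix (Fin n) (Fin L) ℝ) (hW : W ∈ colSparse n L k) :
    mask Z W ∈ colSparse n L k := by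
  intro l
  refine le_trans (Set.ncard_le_ncard ?_ (Set.toFinite _)) (hW l)
  intro i hi
  simp only [Set.mem_setOf_eq, mask] at hi ⊢
  by_contra h0
  simp [h0] at hi

lemma mask_row {n L p : ℕ} (Z W : Matrix (Fin n) (Fin L) ℝ) (hW : W ∈ rowSparse n L p) :
    mask Z W ∈ rowSparse n L p := by
  refine le_trans (Set.ncard_le_ncard ?_ (Set.toFinite _)) hW
  rintro i ⟨l, hl⟩
  refine ⟨l, ?_⟩
  simp only [mask] at hl
  by_contra h0
  simp [h0] at hl

theorem stmt_8 (n L k p : ℕ) (hn : 0 < n) (hL : 0 < L) (hk : 0 < k) (hp : 0 < p)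
    (X : Matrix (Fin n) (Fin L) ℝ) :
    (∀ Z ∈ colSparse n L k,
      (∀ Θ ∈ colSparse n L k, frob (Z - X) ≤ frob (Θ - X)) →
      ∀ W ∈ rowSparse n L p,
        (∀ Θ ∈ rowSparse n L p, frob (W - Z) ≤ frob (Θ - Z)) →
          W ∈ colSparse n L k ∩ rowSparse n L p) ∧
    (∀ Z' ∈ rowSparse n L p,
      (∀ Θ ∈ rowSparse n L p, frob (Z' - X) ≤ frob (Θ - X)) →
      ∀ W' ∈ colSparse n L k,
        (∀ Θ ∈ colSparse n L k, frob (W' - Z') ≤ frob (Θ - Z')) →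
          W' ∈ colSparse n L k ∩ rowSparse n L p) := by
  constructor
  · intro Z hZ _ W hW hmin
    have hkey := key Z W (hmin _ (mask_row Z W hW))
    refine ⟨?_, hW⟩
    intro l
    refine le_trans (Set.ncard_le_ncard ?_ (Set.toFinite _)) (hZ l)
    intro i hi
    simp only [Set.mem_setOf_eq] at hi ⊢
    rw [← hkey i l hi]; exact hi
  · intro Z' hZ' _ W' hW' hmin
    have hkey := key Z' W' (hmin _ (mask_col Z' W' hW'))
    refine ⟨hW', ?_⟩
    refine le_trans (Set.ncard_le_ncard ?_ (Set.toFinite _)) hZ'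
    rintro i ⟨l, hl⟩
    exact ⟨l, by rw [← hkey i l hl]; exact hl⟩
end
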